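/- Let 1 < n < b be natural numbers and let (d_k, d_{k-1}, ..., d_0)_b be an (n,b,σ)-permutiple with carries c_j. Then (n − 1)·Σ_{j=0}^{k} d_j = (b − 1)·Σ_{j=1}^{k} c_j. -/

import Mathlib

/-- The `j`-th carry `c_j = (n·Σ_{i=0}^{j-1} d_{σ(i)}·b^i − Σ_{i=0}^{j-1} d_i·b^i) / b^j`. -/
def carry (n b : ℕ) {k : ℕ} (d : Fin (k + 1) → ℕ) (σ : Equiv.Perm (Fin (k + 1)))
    (j : ℕ) : ℤ :=
  ((n : ℤ) * ∑ i ∈ Finset.univ.filter (fun i : Fin (k + 1) => (i : ℕ) < j),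
      (d (σ i) : ℤ) * (b : ℤ) ^ (i : ℕ)
    - ∑ i ∈ Finset.univ.filter (fun i : Fin (k + 1) => (i : ℕ) < j),
      (d i : ℤ) * (b : ℤ) ^ (i : ℕ)) / (b : ℤ) ^ j

/-!
With `e_j := n·d_{σ(j)} − d_j`, the permutiple equation says `Σ_j e_j b^j = 0`. Hence the
numerator `Σ_{i<j} e_i b^i` of `c_j` equals minus the high part `Σ_{i≥j} e_i b^i`, so it is
divisible by `b^j`, and the exact quotients satisfy `b·c_{j+1} − c_j = e_j` with
`c_0 = c_{k+1} = 0`. Summing over `j` telescopes to `(b − 1)·Σ_j c_j = Σ_j e_j`, which is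
`(n − 1)·Σ_j d_j` because `σ` only permutes the digits.
-/

open Finset

theorem sum_range_mul_succ_sub_eq_sub_one_mul {R : Type*} [CommRing R] (b : R) (c : ℕ → R)
    (k : ℕ) (h₀ : c 0 = 0) (hk : c (k + 1) = 0) :
    ∑ j ∈ range (k + 1), (b * c (j + 1) - c j) = (b - 1) * ∑ j ∈ Icc 1 k, c j := by
  have hIcc : ∑ j ∈ Icc 1 k, c j = ∑ j ∈ range k, c (j + 1) := by
    rw [← Ico_add_one_right_eq_Icc, sum_Ico_eq_sum_range, Nat.add_sub_cancel]
    simp only [add_comm 1]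
  rw [sum_sub_distrib, ← mul_sum, sum_range_succ, sum_range_succ', hIcc, hk, h₀]
  ring

section TruncatedValue

variable {R : Type*} [CommSemiring R] {k : ℕ}

def truncatedValue (b : R) (f : Fin (k + 1) → R) (j : ℕ) : R :=
  ∑ i ∈ univ.filter (fun i : Fin (k + 1) => (i : ℕ) < j), f i * b ^ (i : ℕ)

@[simp]
theorem truncatedValue_zero (b : R) (f : Fin (k + 1) → R) : truncatedValue b f 0 = 0 := by
  simp [truncatedValue]

theorem truncatedValue_of_le (b : R) (f : Fin (k + 1) → R) {j : ℕ} (hj : k + 1 ≤ j) :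
    truncatedValue b f j = ∑ i, f i * b ^ (i : ℕ) := by
  rw [truncatedValue, filter_true_of_mem fun i _ => by omega]

theorem truncatedValue_succ (b : R) (f : Fin (k + 1) → R) (j : Fin (k + 1)) :
    truncatedValue b f (j + 1) = truncatedValue b f j + f j * b ^ (j : ℕ) := by
  have : univ.filter (fun i : Fin (k + 1) => (i : ℕ) < j + 1)
      = insert j (univ.filter fun i : Fin (k + 1) => (i : ℕ) < j) := by
    ext i
    simp only [mem_filter, mem_univ, true_and, mem_insert, Nat.lt_succ_iff_lt_or_eq, Fin.ext_iff]
    tauto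
  rw [truncatedValue, this, sum_insert (by simp), add_comm, truncatedValue]

end TruncatedValue

theorem pow_dvd_truncatedValue {k : ℕ} (b : ℤ) (f : Fin (k + 1) → ℤ)
    (hf : ∑ i, f i * b ^ (i : ℕ) = 0) (j : ℕ) : b ^ j ∣ truncatedValue b f j := by
  have hsplit := sum_filter_add_sum_filter_not univ (fun i : Fin (k + 1) => (i : ℕ) < j)
    (fun i => f i * b ^ (i : ℕ))
  rw [hf, ← eq_neg_iff_add_eq_zero] at hsplit
  rw [truncatedValue, hsplit, dvd_neg]
  refine dvd_sum fun i hi => dvd_mul_of_dvd_right (pow_dvd_pow b ?_) _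
  simpa using hi

theorem sum_eq_sub_one_mul_sum_truncatedValue_div {k : ℕ} {b : ℤ} (hb : b ≠ 0)
    (f : Fin (k + 1) → ℤ) (hf : ∑ i, f i * b ^ (i : ℕ) = 0) :
    ∑ i, f i = (b - 1) * ∑ j ∈ Icc 1 k, truncatedValue b f j / b ^ j := by
  set c : ℕ → ℤ := fun j => truncatedValue b f j / b ^ j
  have hc : ∀ j, c j * b ^ j = truncatedValue b f j := fun j =>
    Int.ediv_mul_cancel (pow_dvd_truncatedValue b f hf j)
  have hstep : ∀ i : Fin (k + 1), f i = b * c (i + 1) - c i := by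
    intro i
    apply mul_right_cancel₀ (pow_ne_zero (i : ℕ) hb)
    calc f i * b ^ (i : ℕ) = truncatedValue b f (i + 1) - truncatedValue b f i := by
          rw [truncatedValue_succ]; ring
      _ = (b * c (i + 1) - c i) * b ^ (i : ℕ) := by rw [← hc, ← hc, pow_succ]; ring
  have h₀ : c 0 = 0 := by simp [c]
  have hk : c (k + 1) = 0 := by simp [c, truncatedValue_of_le b f le_rfl, hf]
  rw [← sum_range_mul_succ_sub_eq_sub_one_mul b c k h₀ hk, sum_congr rfl fun i _ => hstep i]
  exact Fin.sum_univ_eq_sum_range (fun j => b * c (j + 1) - c j) (k + 1)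

theorem carry_eq_truncatedValue_div (n b : ℕ) {k : ℕ} (d : Fin (k + 1) → ℕ)
    (σ : Equiv.Perm (Fin (k + 1))) (j : ℕ) :
    carry n b d σ j
      = truncatedValue (b : ℤ) (fun i => (n : ℤ) * d (σ i) - d i) j / (b : ℤ) ^ j := by
  simp only [carry, truncatedValue, mul_sum, ← sum_sub_distrib, sub_mul, mul_assoc]

theorem digit_sum_carry_sum_general
    (n b k : ℕ) (hnb : n < b)
    (d : Fin (k + 1) → ℕ)
    (σ : Equiv.Perm (Fin (k + 1)))
    (hperm : ∑ j : Fin (k + 1), d j * b ^ (j : ℕ)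
      = n * ∑ j : Fin (k + 1), d (σ j) * b ^ (j : ℕ)) :
    ((n : ℤ) - 1) * ∑ j : Fin (k + 1), (d j : ℤ)
      = ((b : ℤ) - 1) * ∑ j ∈ Finset.Icc 1 k, carry n b d σ j := by
  set e : Fin (k + 1) → ℤ := fun i => (n : ℤ) * d (σ i) - d i
  have he : ∑ i, e i * (b : ℤ) ^ (i : ℕ) = 0 := by
    have := congrArg (Nat.cast : ℕ → ℤ) hperm
    push_cast at this
    simp only [e, sub_mul, sum_sub_distrib, mul_assoc, ← mul_sum, ← this, sub_self]
  have hdigits : ((n : ℤ) - 1) * ∑ j, (d j : ℤ) = ∑ i, e i := by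
    rw [sum_sub_distrib, ← mul_sum, Equiv.sum_comp σ (fun i => (d i : ℤ))]
    ring
  simp only [hdigits, carry_eq_truncatedValue_div]
  exact sum_eq_sub_one_mul_sum_truncatedValue_div (by omega) e he

theorem digit_sum_carry_sum
    (n b k : ℕ) (hn : 1 < n) (hnb : n < b)
    (d : Fin (k + 1) → ℕ) (hd : ∀ j, d j < b)
    (σ : Equiv.Perm (Fin (k + 1)))
    (hperm : ∑ j : Fin (k + 1), d j * b ^ (j : ℕ)
      = n * ∑ j : Fin (k + 1), d (σ j) * b ^ (j : ℕ)) :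
    ((n : ℤ) - 1) * ∑ j : Fin (k + 1), (d j : ℤ)
      = ((b : ℤ) - 1) * ∑ j ∈ Finset.Icc 1 k, carry n b d σ j :=
  digit_sum_carry_sum_general n b k hnb d σ hperm
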